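/- arXiv:1808.05588 — 3 statements merged into one kernel-verified Lean document; each statement's English description precedes it below -/
import Mathlib

section
/- Let G be a topological group and L a subgroup of G whose identity component L₀ is an open subgroup of L. Let H, K⁺, K⁻ be subgroups of L such that H ⊆ K⁺, H ⊆ K⁻, the subgroup K⁺ is connected, and the left coset space K⁻/H, equipped with the quotient topology, is connected. Then L₀ is a connected subgroup of G containing both K⁺ and K⁻; in particular, if L is a proper subgroup of G, then there is a connected proper subgroup of G containing both K⁺ and K⁻. -/
/-!
A connected subgroup of `L` through `1` lies in `L₀`, which settles `K⁺`. For `K⁻`, the subgroup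
`L₀ ∩ K⁻` is open in `K⁻` and contains `H ⊆ K⁺ ⊆ L₀`; being a union of `H`-cosets, open and closed,
its image in the connected space `K⁻/H` is clopen and nonempty, so `K⁻ ⊆ L₀`.
-/

namespace Subgroup

theorem eq_top_of_isOpen_of_le_of_connectedSpace_quotient {K : Type*} [Group K]
    [TopologicalSpace K] [SeparatelyContinuousMul K] {H U : Subgroup K} [ConnectedSpace (K ⧸ H)]
    (hU : IsOpen (U : Set K)) (hHU : H ≤ U) : U = ⊤ := by
  set V : Set (K ⧸ H) := QuotientGroup.mk '' (U : Set K)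
  have hV : QuotientGroup.mk ⁻¹' V = U :=
    (QuotientGroup.preimage_image_mk_eq_mul H _).trans <| subset_antisymm
      ((Set.mul_subset_mul_left hHU).trans (Submonoid.coe_mul_self_eq U.toSubmonoid).subset)
      (Set.subset_mul_left _ H.one_mem)
  have hVclopen : IsClopen V := by
    rw [← (QuotientGroup.isQuotientMap_mk H).isClopen_preimage, hV]
    exact ⟨U.isClosed_of_isOpen hU, hU⟩
  rw [← coe_eq_univ, ← hV, hVclopen.eq_univ ⟨_, 1, U.one_mem, rfl⟩, Set.preimage_univ]

variable {G : Type*} [Group G] [TopologicalSpace G] [IsTopologicalGroup G]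

theorem isConnected_map_subtype_connectedComponentOfOne (L : Subgroup G) :
    IsConnected (((connectedComponentOfOne L).map L.subtype : Subgroup G) : Set G) := by
  rw [coe_map]
  exact isConnected_connectedComponent.image _ continuous_subtype_val.continuousOn

theorem le_map_connectedComponentOfOne_of_isConnected {L K : Subgroup G} (hKL : K ≤ L)
    (hK : IsConnected (K : Set G)) : K ≤ (connectedComponentOfOne L).map L.subtype := by
  have : ConnectedSpace K := isConnected_iff_connectedSpace.mp hK
  have hrange : Set.range (inclusion hKL) ⊆ connectedComponent 1 :=
    (isConnected_range (continuous_inclusion hKL)).isPreconnected.subset_connectedComponent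
      ⟨1, rfl⟩
  intro x hx
  exact mem_map_of_mem L.subtype
    (show inclusion hKL ⟨x, hx⟩ ∈ connectedComponentOfOne L from hrange ⟨⟨x, hx⟩, rfl⟩)

theorem le_map_connectedComponentOfOne_of_connectedSpace_quotient {L H K : Subgroup G}
    (hKL : K ≤ L) (hopen : IsOpen ((connectedComponentOfOne L : Subgroup L) : Set L))
    (hH : H ≤ (connectedComponentOfOne L).map L.subtype)
    [ConnectedSpace (K ⧸ H.subgroupOf K)] : K ≤ (connectedComponentOfOne L).map L.subtype := by
  have hU : (connectedComponentOfOne L).comap (inclusion hKL) = ⊤ := by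
    refine eq_top_of_isOpen_of_le_of_connectedSpace_quotient (H := H.subgroupOf K)
      (hopen.preimage (continuous_inclusion hKL)) fun h hh => ?_
    obtain ⟨y, hy, hyh⟩ := hH hh
    rwa [mem_comap, show inclusion hKL h = y from Subtype.ext hyh.symm]
  intro x hx
  exact mem_map_of_mem L.subtype
    (show inclusion hKL ⟨x, hx⟩ ∈ connectedComponentOfOne L from hU.ge (mem_top _))

end Subgroup

theorem nonprimitive_connected_intermediate_subgroup_general
    {G : Type*} [Group G] [TopologicalSpace G] [IsTopologicalGroup G]
    (L H Kp Km : Subgroup G) (hKpL : Kp ≤ L) (hKmL : Km ≤ L)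
    (hHKp : H ≤ Kp)
    (hopen : IsOpen ((Subgroup.connectedComponentOfOne L : Subgroup L) : Set L))
    (hKpconn : IsConnected (Kp : Set G))
    (hconn : ConnectedSpace (Km ⧸ H.subgroupOf Km)) :
    IsConnected (((Subgroup.connectedComponentOfOne L).map L.subtype : Subgroup G) : Set G) ∧
      Kp ≤ (Subgroup.connectedComponentOfOne L).map L.subtype ∧
      Km ≤ (Subgroup.connectedComponentOfOne L).map L.subtype ∧
      (L ≠ ⊤ → ∃ L' : Subgroup G, L' ≠ ⊤ ∧ IsConnected (L' : Set G) ∧ Kp ≤ L' ∧ Km ≤ L') := by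
  have hL₀ := Subgroup.isConnected_map_subtype_connectedComponentOfOne L
  have hKp := Subgroup.le_map_connectedComponentOfOne_of_isConnected hKpL hKpconn
  have hKm := Subgroup.le_map_connectedComponentOfOne_of_connectedSpace_quotient hKmL hopen
    (hHKp.trans hKp)
  exact ⟨hL₀, hKp, hKm, fun hL =>
    ⟨_, ne_top_of_le_ne_top hL (Subgroup.map_subtype_le _), hL₀, hKp, hKm⟩⟩

/-- If `L` is a subgroup of a topological group `G` whose identity component `L₀` is open
in `L` (with the subspace topology), and `H, K⁺, K⁻` are subgroups contained in `L` with
`H ⊆ K⁺`, `H ⊆ K⁻`, `K⁺` connected, and the coset space `K⁻/H` (quotient topology)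
connected, then the image `L₀` of the identity component of `L` in `G` is a connected
subgroup of `G` containing both `K⁺` and `K⁻`; in particular, if `L` is proper, then a
connected proper subgroup of `G` contains both `K⁺` and `K⁻`. -/
theorem nonprimitive_connected_intermediate_subgroup
    {G : Type*} [Group G] [TopologicalSpace G] [IsTopologicalGroup G]
    (L H Kp Km : Subgroup G) (hKpL : Kp ≤ L) (hKmL : Km ≤ L)
    (hHKp : H ≤ Kp) (hHKm : H ≤ Km)
    (hopen : IsOpen ((Subgroup.connectedComponentOfOne L : Subgroup L) : Set L))
    (hKpconn : IsConnected (Kp : Set G))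
    (hconn : ConnectedSpace (Km ⧸ H.subgroupOf Km)) :
    IsConnected (((Subgroup.connectedComponentOfOne L).map L.subtype : Subgroup G) : Set G) ∧
      Kp ≤ (Subgroup.connectedComponentOfOne L).map L.subtype ∧
      Km ≤ (Subgroup.connectedComponentOfOne L).map L.subtype ∧
      (L ≠ ⊤ → ∃ L' : Subgroup G, L' ≠ ⊤ ∧ IsConnected (L' : Set G) ∧ Kp ≤ L' ∧ Km ≤ L') :=
  nonprimitive_connected_intermediate_subgroup_general L H Kp Km hKpL hKmL hHKp hopen hKpconn hconn
end

section
/- With the exact-sequence data and the invariant d defined below, one has d(E) = d(F) + d(B) − 2·Σ_{k odd} rank(∂_k), where the sum runs over all odd natural numbers k and rank denotes the dimension of the image of a linear map. -/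
open Module

/-- The invariant `d(X) = Σ_{k odd} k·(dim X_k − dim X_{k+1})` of a graded family of
rational vector spaces. The sum has finitely many nonzero terms when the family vanishes
in all sufficiently large degrees. -/
noncomputable def gradedD (X : ℕ → Type) [∀ k, AddCommGroup (X k)] [∀ k, Module ℚ (X k)] : ℤ :=
  ∑ᶠ k ∈ {k : ℕ | Odd k},
    (k : ℤ) * ((finrank ℚ (X k) : ℤ) - (finrank ℚ (X (k + 1)) : ℤ))

/-- Convert a finsum over odd naturals of an eventually-zero function to a finset sum. -/
lemma finsum_odd_eq_sum_range (g : ℕ → ℤ) (M : ℕ) (h : ∀ k, M ≤ k → g k = 0) :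
    ∑ᶠ k ∈ {k : ℕ | Odd k}, g k
      = ∑ k ∈ (Finset.range M).filter (fun k => Odd k), g k := by
  apply finsum_mem_eq_sum_of_inter_support_eq
  ext k
  simp only [Set.mem_inter_iff, Set.mem_setOf_eq, Function.mem_support, Finset.coe_filter,
    Finset.mem_range]
  constructor
  · rintro ⟨hk, hg⟩
    refine ⟨⟨?_, hk⟩, hg⟩
    by_contra hM
    exact hg (h k (le_of_not_gt hM))
  · rintro ⟨⟨_, hk⟩, hg⟩
    exact ⟨hk, hg⟩

/-- Reindex a sum over odd naturals below `2M` as a sum over `m < M` at `2m+1`. -/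
lemma sum_odd_filter (g : ℕ → ℤ) (M : ℕ) :
    ∑ k ∈ (Finset.range (2 * M)).filter (fun k => Odd k), g k
      = ∑ m ∈ Finset.range M, g (2 * m + 1) := by
  induction M with
  | zero => simp
  | succ M ih =>
    have h2 : 2 * (M + 1) = (2 * M + 1) + 1 := by ring
    rw [h2, Finset.range_add_one, Finset.range_add_one, Finset.filter_insert, Finset.filter_insert]
    have hodd : Odd (2 * M + 1) := ⟨M, by ring⟩
    have heven : ¬ Odd (2 * M) := by simp [Nat.odd_iff, Nat.mul_mod_right]
    rw [if_pos hodd, if_neg heven, Finset.sum_insert (by simp), Finset.sum_range_succ, ih]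
    ring

/-- Abel/telescoping identity. -/
lemma telescope (s : ℕ → ℤ) (M : ℕ) :
    ∑ m ∈ Finset.range M, (2 * (m : ℤ) + 1) * (s m - s (m + 1))
      = 2 * ∑ m ∈ Finset.range M, s m - s 0 - (2 * (M : ℤ) - 1) * s M := by
  induction M with
  | zero => simp
  | succ M ih =>
    rw [Finset.sum_range_succ, Finset.sum_range_succ, ih]
    push_cast
    ring

/-- For a long exact sequence `⋯ → F_k → E_k → B_k →(∂_k) F_{k−1} → ⋯` of
finite-dimensional rational vector spaces vanishing in degree `0` and in all sufficiently
large degrees, the invariant `d` satisfies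
`d(E) = d(F) + d(B) − 2·Σ_{k odd} rank ∂_k`. -/
theorem gradedD_eq_of_les
    (F E B : ℕ → Type) [∀ k, AddCommGroup (F k)] [∀ k, Module ℚ (F k)]
    [∀ k, AddCommGroup (E k)] [∀ k, Module ℚ (E k)]
    [∀ k, AddCommGroup (B k)] [∀ k, Module ℚ (B k)]
    [∀ k, FiniteDimensional ℚ (F k)] [∀ k, FiniteDimensional ℚ (E k)]
    [∀ k, FiniteDimensional ℚ (B k)]
    (hF0 : Subsingleton (F 0)) (hE0 : Subsingleton (E 0)) (hB0 : Subsingleton (B 0))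
    (hvanish : ∃ N, ∀ k, N ≤ k → Subsingleton (F k) ∧ Subsingleton (E k) ∧ Subsingleton (B k))
    (i : ∀ k, F k →ₗ[ℚ] E k) (p : ∀ k, E k →ₗ[ℚ] B k) (bd : ∀ k, B k →ₗ[ℚ] F (k - 1))
    (hexF : ∀ k, LinearMap.range (bd (k + 1)) = LinearMap.ker (i k))
    (hexE : ∀ k, LinearMap.range (i k) = LinearMap.ker (p k))
    (hexB : ∀ k, LinearMap.range (p k) = LinearMap.ker (bd k)) :
    gradedD E = gradedD F + gradedD B
      - 2 * ∑ᶠ k ∈ {k : ℕ | Odd k}, (finrank ℚ (LinearMap.range (bd k)) : ℤ) := by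
  obtain ⟨N, hN⟩ := hvanish
  -- shorthand dimensions (plain functions, not `set`, to keep syntactic control)
  let f : ℕ → ℤ := fun k => (finrank ℚ (F k) : ℤ)
  let e : ℕ → ℤ := fun k => (finrank ℚ (E k) : ℤ)
  let b : ℕ → ℤ := fun k => (finrank ℚ (B k) : ℤ)
  let r : ℕ → ℤ := fun k => (finrank ℚ (LinearMap.range (bd k)) : ℤ)
  have hrb : ∀ k, r k ≤ b k := by
    intro k
    show ((finrank ℚ (LinearMap.range (bd k)) : ℤ)) ≤ ((finrank ℚ (B k) : ℤ))
    exact_mod_cast LinearMap.finrank_range_le (bd k)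
  have hb0 : ∀ k, Subsingleton (B k) → b k = 0 := by
    intro k hk
    haveI := hk
    simp only [b, Nat.cast_eq_zero]
    exact finrank_zero_of_subsingleton
  have hr0 : ∀ k, Subsingleton (B k) → r k = 0 := by
    intro k hk
    have h1 := hrb k
    have h2 : (0 : ℤ) ≤ r k := by positivity
    have h3 := hb0 k hk
    omega
  -- the key dimension identity from exactness
  have hkey : ∀ k, e k = f k + b k - r k - r (k + 1) := by
    intro k
    have h1 := LinearMap.finrank_range_add_finrank_ker (p k)
    have h2 := LinearMap.finrank_range_add_finrank_ker (bd k)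
    have h3 := LinearMap.finrank_range_add_finrank_ker (i k)
    have e1 : finrank ℚ (LinearMap.ker (p k)) = finrank ℚ (LinearMap.range (i k)) := by
      rw [hexE k]
    have e2 : finrank ℚ (LinearMap.range (p k)) = finrank ℚ (LinearMap.ker (bd k)) := by
      rw [hexB k]
    have e3 : finrank ℚ (LinearMap.ker (i k)) = finrank ℚ (LinearMap.range (bd (k + 1))) := by
      rw [hexF k]
      rfl
    simp only [e, f, b, r]
    omega
  -- ranks of boundary maps are nonneg and `r 1 = 0` since `F 0` is trivial
  have hr1 : r 1 = 0 := by
    haveI := hF0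
    have h1 : finrank ℚ (LinearMap.range (bd 1)) ≤ finrank ℚ (F 0) :=
      Submodule.finrank_le _
    have h2 : finrank ℚ (F 0) = 0 := finrank_zero_of_subsingleton
    simp only [r, Nat.cast_eq_zero]
    omega
  -- big even bound
  set M := N + 1 with hM
  have hbig : ∀ k, 2 * M ≤ k + 1 → (f k = 0 ∧ e k = 0 ∧ b k = 0 ∧ r k = 0) := by
    intro k hk
    obtain ⟨h1, h2, h3⟩ := hN k (by omega)
    haveI := h1; haveI := h2
    refine ⟨?_, ?_, hb0 k h3, hr0 k h3⟩
    · simp only [f, Nat.cast_eq_zero]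
      exact finrank_zero_of_subsingleton
    · simp only [e, Nat.cast_eq_zero]
      exact finrank_zero_of_subsingleton
  -- rewrite gradedD E as a finite sum over odd indices
  have hgE : gradedD E = ∑ m ∈ Finset.range M,
      (2 * (m : ℤ) + 1) * (e (2 * m + 1) - e (2 * m + 1 + 1)) := by
    rw [gradedD, finsum_odd_eq_sum_range
      (fun k : ℕ => (k : ℤ) * ((finrank ℚ (E k) : ℤ) - (finrank ℚ (E (k + 1)) : ℤ))) (2 * M)
      (by
        intro k hk
        have h1 := (hbig k (by omega)).2.1
        have h2 := (hbig (k + 1) (by omega)).2.1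
        simp only [e, Nat.cast_eq_zero] at h1 h2
        simp [h1, h2]),
      sum_odd_filter]
    apply Finset.sum_congr rfl
    intro m _
    simp only [e]
    push_cast
    ring
  have hgF : gradedD F = ∑ m ∈ Finset.range M,
      (2 * (m : ℤ) + 1) * (f (2 * m + 1) - f (2 * m + 1 + 1)) := by
    rw [gradedD, finsum_odd_eq_sum_range
      (fun k : ℕ => (k : ℤ) * ((finrank ℚ (F k) : ℤ) - (finrank ℚ (F (k + 1)) : ℤ))) (2 * M)
      (by
        intro k hk
        have h1 := (hbig k (by omega)).1
        have h2 := (hbig (k + 1) (by omega)).1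
        simp only [f, Nat.cast_eq_zero] at h1 h2
        simp [h1, h2]),
      sum_odd_filter]
    apply Finset.sum_congr rfl
    intro m _
    simp only [f]
    push_cast
    ring
  have hgB : gradedD B = ∑ m ∈ Finset.range M,
      (2 * (m : ℤ) + 1) * (b (2 * m + 1) - b (2 * m + 1 + 1)) := by
    rw [gradedD, finsum_odd_eq_sum_range
      (fun k : ℕ => (k : ℤ) * ((finrank ℚ (B k) : ℤ) - (finrank ℚ (B (k + 1)) : ℤ))) (2 * M)
      (by
        intro k hk
        have h1 := (hbig k (by omega)).2.2.1
        have h2 := (hbig (k + 1) (by omega)).2.2.1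
        simp only [b, Nat.cast_eq_zero] at h1 h2
        simp [h1, h2]),
      sum_odd_filter]
    apply Finset.sum_congr rfl
    intro m _
    simp only [b]
    push_cast
    ring
  have hgR : ∑ᶠ k ∈ {k : ℕ | Odd k}, (finrank ℚ (LinearMap.range (bd k)) : ℤ)
      = ∑ m ∈ Finset.range M, r (2 * m + 1) := by
    rw [finsum_odd_eq_sum_range
      (fun k : ℕ => (finrank ℚ (LinearMap.range (bd k)) : ℤ)) (2 * M)
      (fun k hk => (hbig k (by omega)).2.2.2),
      sum_odd_filter]
  rw [hgE, hgF, hgB, hgR]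
  -- substitute the key identity and telescope
  have hsplit : ∀ m ∈ Finset.range M,
      (2 * (m : ℤ) + 1) * (e (2 * m + 1) - e (2 * m + 1 + 1))
      = (2 * (m : ℤ) + 1) * (f (2 * m + 1) - f (2 * m + 1 + 1))
        + (2 * (m : ℤ) + 1) * (b (2 * m + 1) - b (2 * m + 1 + 1))
        - (2 * (m : ℤ) + 1) * ((fun n => r (2 * n + 1)) m - (fun n => r (2 * n + 1)) (m + 1)) := by
    intro m _
    have h1 := hkey (2 * m + 1)
    have h2 := hkey (2 * m + 1 + 1)
    have h3 : 2 * m + 1 + 1 + 1 = 2 * (m + 1) + 1 := by ring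
    rw [h3] at h2
    simp only []
    rw [h1, h2]
    ring
  rw [Finset.sum_congr rfl hsplit, Finset.sum_sub_distrib, Finset.sum_add_distrib,
    telescope (fun n => r (2 * n + 1)) M]
  have hsM : r (2 * M + 1) = 0 := (hbig (2 * M + 1) (by omega)).2.2.2
  simp only [hsM, hr1]
  ring
end

section
/- Let n ≥ 1, and regard ℂ as the subring of the real quaternions ℍ spanned by 1 and i. Let v = (1, i, 0, …, 0) and w = (1, j, 0, …, 0) be vectors in ℍ^{n+1}, where i and j are the standard quaternion units. Then for every matrix A in the complex special unitary group SU(n+1), every z ∈ ℂ with |z| = 1, and every quaternion p of norm 1, the vector obtained from A·v by multiplying each entry on the left by z (all products computed in ℍ via the embedding ℂ ↪ ℍ) is not equal to the vector (1·p, j·p, 0, …, 0) obtained from w by multiplying each entry on the right by p. Equivalently, the action of SU(n+1) × S¹ on quaternionic projective space ℍP^n given by (A, e^{iθ})·[v] = [e^{iθ/2} A v] cannot move the point [1 : i : 0 : … : 0] to the point [1 : j : 0 : … : 0], and hence this action is not transitive. -/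
/-!
The entries of `z • A v` are `ℂ`-linear combinations of `1` and `i`, so they lie in the copy
`ℂ = ℝ ⊕ ℝi` of the complex numbers inside `ℍ`, which is closed under sums and products.
The entries `p` and `j p` of `w p` can both lie in `ℂ` only if `p = 0`, since left
multiplication by `j` maps `ℂ` onto `ℝj ⊕ ℝk`.
-/

open Quaternion

/-- The embedding of `ℂ` into the real quaternions sending `a + b·i` to `a + b·i`. -/
noncomputable def complexToQuat (z : ℂ) : ℍ[ℝ] := ⟨z.re, z.im, 0, 0⟩

/-- The quaternion unit `i`. -/
noncomputable def quatI : ℍ[ℝ] := ⟨0, 1, 0, 0⟩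

/-- The quaternion unit `j`. -/
noncomputable def quatJ : ℍ[ℝ] := ⟨0, 0, 1, 0⟩

section ComplexSubalgebra

variable (R : Type*) [CommRing R]

def complexSubalgebra : Subalgebra R ℍ[R] where
  carrier := {q | q.imJ = 0 ∧ q.imK = 0}
  mul_mem' := by
    rintro a b ⟨ha₂, ha₃⟩ ⟨hb₂, hb₃⟩
    simp [ha₂, ha₃, hb₂, hb₃]
  add_mem' := by
    rintro a b ⟨ha₂, ha₃⟩ ⟨hb₂, hb₃⟩
    simp [ha₂, ha₃, hb₂, hb₃]
  algebraMap_mem' r := by simp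

variable {R}

theorem mem_complexSubalgebra {q : ℍ[R]} :
    q ∈ complexSubalgebra R ↔ q.imJ = 0 ∧ q.imK = 0 :=
  Iff.rfl

end ComplexSubalgebra

theorem complexToQuat_mem_complexSubalgebra (z : ℂ) : complexToQuat z ∈ complexSubalgebra ℝ :=
  ⟨rfl, rfl⟩

theorem quatI_mem_complexSubalgebra : quatI ∈ complexSubalgebra ℝ :=
  ⟨rfl, rfl⟩

/-- Left multiplication by `j` sends `a + b i` to `a j - b k`. -/
theorem eq_zero_of_mem_complexSubalgebra_of_quatJ_mul_mem {p : ℍ[ℝ]}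
    (hp : p ∈ complexSubalgebra ℝ) (hjp : quatJ * p ∈ complexSubalgebra ℝ) : p = 0 := by
  obtain ⟨hp₂, hp₃⟩ := mem_complexSubalgebra.mp hp
  obtain ⟨hjp₂, hjp₃⟩ := mem_complexSubalgebra.mp hjp
  simp only [imJ_mul, imK_mul] at hjp₂ hjp₃
  simp [quatJ] at hjp₂ hjp₃
  ext <;> simp [*]

theorem su_circle_action_not_transitive_general (n : ℕ) (hn : 1 ≤ n)
    (v w : Fin (n + 1) → ℍ[ℝ])
    (hv : v = fun idx => if idx = 0 then 1 else if idx = 1 then quatI else 0)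
    (hw : w = fun idx => if idx = 0 then 1 else if idx = 1 then quatJ else 0)
    (A : Matrix.specialUnitaryGroup (Fin (n + 1)) ℂ)
    (z : ℂ) (p : ℍ[ℝ]) (hp : ‖p‖ = 1) :
    (fun idx => complexToQuat z *
        ∑ m, complexToQuat ((A : Matrix (Fin (n + 1)) (Fin (n + 1)) ℂ) idx m) * v m)
      ≠ fun idx => w idx * p := by
  intro h
  have hv_mem (m : Fin (n + 1)) : v m ∈ complexSubalgebra ℝ := by
    subst hv
    dsimp only
    split_ifs
    exacts [one_mem _, quatI_mem_complexSubalgebra, zero_mem _]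
  have hwp_mem (idx : Fin (n + 1)) : w idx * p ∈ complexSubalgebra ℝ := by
    rw [← congrFun h idx]
    refine mul_mem (complexToQuat_mem_complexSubalgebra z) (sum_mem fun m _ => ?_)
    exact mul_mem (complexToQuat_mem_complexSubalgebra _) (hv_mem m)
  have h01 : (1 : Fin (n + 1)) ≠ 0 := by
    simpa [Fin.one_eq_zero_iff] using Nat.one_le_iff_ne_zero.mp hn
  have hp_mem : p ∈ complexSubalgebra ℝ := by simpa [hw] using hwp_mem 0
  have hjp_mem : quatJ * p ∈ complexSubalgebra ℝ := by simpa [hw, h01] using hwp_mem 1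
  have hp0 := eq_zero_of_mem_complexSubalgebra_of_quatJ_mul_mem hp_mem hjp_mem
  simp [hp0] at hp

/-- Let `v = (1, i, 0, …, 0)` and `w = (1, j, 0, …, 0)` in `ℍ^{n+1}`, where `n ≥ 1`. For
every `A ∈ SU(n+1)`, every unit complex number `z`, and every unit quaternion `p`, the
vector obtained from `A·v` by left multiplication of each entry by `z` is not the vector
obtained from `w` by right multiplication of each entry by `p`. Hence the action of
`SU(n+1) × S¹` on `ℍP^n` given by `(A, e^{iθ})·[v] = [e^{iθ/2} A v]` cannot move
`[1 : i : 0 : … : 0]` to `[1 : j : 0 : … : 0]`, so it is not transitive. -/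
theorem su_circle_action_not_transitive (n : ℕ) (hn : 1 ≤ n)
    (v w : Fin (n + 1) → ℍ[ℝ])
    (hv : v = fun idx => if idx = 0 then 1 else if idx = 1 then quatI else 0)
    (hw : w = fun idx => if idx = 0 then 1 else if idx = 1 then quatJ else 0)
    (A : Matrix.specialUnitaryGroup (Fin (n + 1)) ℂ)
    (z : ℂ) (hz : ‖z‖ = 1) (p : ℍ[ℝ]) (hp : ‖p‖ = 1) :
    (fun idx => complexToQuat z *
        ∑ m, complexToQuat ((A : Matrix (Fin (n + 1)) (Fin (n + 1)) ℂ) idx m) * v m)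
      ≠ fun idx => w idx * p :=
  su_circle_action_not_transitive_general n hn v w hv hw A z p hp
end
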